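/- Let m, n ≥ 2 be integers, let G be a finite simple graph on the vertex set [n], and let A ⊆ [n] be any subset of vertices. Then for the lexicographic order <, ini_<(𝔍_G + (x_{kj} : 1 ≤ k ≤ m, j ∈ A)) = ini_<(𝔍_G) + (x_{kj} : 1 ≤ k ≤ m, j ∈ A). -/

import Mathlib

open scoped TensorProduct

namespace GBEI

/-! ### Graph-theoretic notions -/

/-- Number of connected components of a graph. -/
noncomputable def ncomp {V : Type} (G : SimpleGraph V) : ℕ :=
  Nat.card G.ConnectedComponent

/-- Number of connected components of the induced subgraph on the complement of `T`. -/
noncomputable def ncompDel {V : Type} (G : SimpleGraph V) (T : Finset V) : ℕ :=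
  Nat.card (G.induce ((↑T : Set V)ᶜ)).ConnectedComponent

/-- `T` is a cut set: deleting `T` increases the number of connected components. -/
def IsCutSet {V : Type} (G : SimpleGraph V) (T : Finset V) : Prop :=
  ncomp G < ncompDel G T

/-- `T` is a cut set which is minimal with respect to inclusion. -/
def IsMinimalCutSet {V : Type} (G : SimpleGraph V) (T : Finset V) : Prop :=
  IsCutSet G T ∧ ∀ T' ⊆ T, IsCutSet G T' → T' = T

/-- `aCount G i` is the number of minimal cut sets of `G` of cardinality `i`. -/
noncomputable def aCount {V : Type} (G : SimpleGraph V) (i : ℕ) : ℕ :=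
  Set.ncard {T : Finset V | IsMinimalCutSet G T ∧ T.card = i}

/-- `T` has the cut point property: for every `i ∈ T`,
`c(T \ {i}) < c(T)` where `c(T)` is the number of connected components of `G` restricted
to the complement of `T`. -/
def HasCutPointProperty {V : Type} [DecidableEq V] (G : SimpleGraph V) (T : Finset V) : Prop :=
  ∀ i ∈ T, ncompDel G (T.erase i) < ncompDel G T

/-- A graph is chordal if it has no induced cycle of length at least 4. -/
def Chordal {V : Type} (G : SimpleGraph V) : Prop :=
  ∀ k : ℕ, 4 ≤ k → IsEmpty (SimpleGraph.cycleGraph k ↪g G)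

/-- A maximal clique of `G`, as a finite set of vertices. -/
def IsMaxClique {V : Type} (G : SimpleGraph V) (s : Finset V) : Prop :=
  G.IsClique (↑s : Set V) ∧ ∀ t : Finset V, G.IsClique (↑t : Set V) → s ⊆ t → s = t

/-- A generalized block graph: a chordal graph in which, for any three (distinct) maximal
cliques with nonempty common intersection, the pairwise intersections all coincide. -/
def IsGeneralizedBlockGraph {V : Type} [DecidableEq V] (G : SimpleGraph V) : Prop :=
  Chordal G ∧
    ∀ F₁ F₂ F₃ : Finset V, IsMaxClique G F₁ → IsMaxClique G F₂ → IsMaxClique G F₃ →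
      F₁ ≠ F₂ → F₁ ≠ F₃ → F₂ ≠ F₃ → (F₁ ∩ F₂ ∩ F₃).Nonempty →
      F₁ ∩ F₂ = F₂ ∩ F₃ ∧ F₁ ∩ F₃ = F₂ ∩ F₃

/-- A block graph: a chordal graph in which any two distinct maximal cliques meet in at
most one vertex. -/
def IsBlockGraph {V : Type} [DecidableEq V] (G : SimpleGraph V) : Prop :=
  Chordal G ∧
    ∀ F₁ F₂ : Finset V, IsMaxClique G F₁ → IsMaxClique G F₂ → F₁ ≠ F₂ → (F₁ ∩ F₂).card ≤ 1

/-- The complete graph on a finite set `B` of vertices (with all other vertices isolated). -/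
def cliqueOn {V : Type} (B : Finset V) : SimpleGraph V where
  Adj u v := u ≠ v ∧ u ∈ B ∧ v ∈ B
  symm := ⟨fun u v ⟨h1, h2, h3⟩ => ⟨h1.symm, h3, h2⟩⟩
  loopless := ⟨fun u h => h.1 rfl⟩

/-- The graph obtained from `G` by deleting all vertices in `A` (keeping the ambient
vertex type; deleted vertices become isolated). Its edges are exactly the edges of the
induced subgraph of `G` on the complement of `A`. -/
def delVerts {V : Type} (G : SimpleGraph V) (A : Finset V) : SimpleGraph V where
  Adj u v := G.Adj u v ∧ u ∉ A ∧ v ∉ A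
  symm := ⟨fun u v ⟨h1, h2, h3⟩ => ⟨h1.symm, h3, h2⟩⟩
  loopless := ⟨fun u h => G.irrefl h.1⟩

/-! ### The polynomial ring and generalized binomial edge ideals -/

/-- The polynomial ring `K[x_{kj} : 1 ≤ k ≤ m, 1 ≤ j ≤ n]`; the variable type carries the
lexicographic order in which `x_{11}` is the smallest index (hence the largest variable for
the induced lexicographic monomial order). -/
abbrev PolyS (K : Type) [Field K] (m n : ℕ) : Type := MvPolynomial (Fin m ×ₗ Fin n) K

/-- The variable `x_{kj}`. -/
noncomputable def xv (K : Type) [Field K] {m n : ℕ} (k : Fin m) (j : Fin n) : PolyS K m n :=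
  MvPolynomial.X (toLex (k, j))

/-- The 2-minor `[k,l|i,j] = x_{ki} x_{lj} - x_{li} x_{kj}`. -/
noncomputable def pminor (K : Type) [Field K] {m n : ℕ} (k l : Fin m) (i j : Fin n) :
    PolyS K m n :=
  xv K k i * xv K l j - xv K l i * xv K k j

/-- The generalized binomial edge ideal `𝔍_G` of a graph `G` on `[n]`. -/
noncomputable def gbei (K : Type) [Field K] (m : ℕ) {n : ℕ} (G : SimpleGraph (Fin n)) :
    Ideal (PolyS K m n) :=
  Ideal.span {f | ∃ (k l : Fin m) (i j : Fin n),
    k < l ∧ i < j ∧ G.Adj i j ∧ f = pminor K k l i j}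

/-- The ideal generated by the variables `x_{kj}`, `1 ≤ k ≤ m`, `j ∈ A`. -/
noncomputable def varsIdeal (K : Type) [Field K] (m : ℕ) {n : ℕ} (A : Finset (Fin n)) :
    Ideal (PolyS K m n) :=
  Ideal.span {f | ∃ (k : Fin m) (j : Fin n), j ∈ A ∧ f = xv K k j}

/-! ### Lexicographic initial ideals -/

/-- `d` is the exponent vector of the lexicographic leading monomial of `p`, for the
lexicographic order with `x_{11} > ⋯ > x_{1n} > x_{21} > ⋯ > x_{mn}`. -/
def IsLeadExp (K : Type) [Field K] {m n : ℕ} (p : PolyS K m n)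
    (d : (Fin m ×ₗ Fin n) →₀ ℕ) : Prop :=
  d ∈ p.support ∧ ∀ e ∈ p.support, e ≠ d → toLex e < toLex d

/-- The initial ideal of `I` with respect to the lexicographic order: the ideal generated
by the leading monomials of the nonzero elements of `I`. -/
noncomputable def iniIdeal (K : Type) [Field K] {m n : ℕ} (I : Ideal (PolyS K m n)) :
    Ideal (PolyS K m n) :=
  Ideal.span {f | ∃ p ∈ I, ∃ d, IsLeadExp K p d ∧ f = MvPolynomial.monomial d (1 : K)}

/-! ### Projective dimension, depth and Castelnuovo–Mumford regularity -/

/-- `M` admits a resolution `0 → F_k → ⋯ → F_1 → F_0 → M → 0` by finitely generated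
free `R`-modules. -/
def HasFreeResLen (R : Type) [CommRing R] (M : Type) [AddCommGroup M] [Module R M]
    (k : ℕ) : Prop :=
  ∃ (ι : ℕ → Type) (_ : ∀ i, Finite (ι i))
    (d : ∀ i : ℕ, (ι (i + 1) →₀ R) →ₗ[R] (ι i →₀ R)) (ε : (ι 0 →₀ R) →ₗ[R] M),
      (∀ i, k < i → IsEmpty (ι i)) ∧
      Function.Surjective ε ∧
      Function.Exact (d 0) ε ∧
      ∀ i, Function.Exact (d (i + 1)) (d i)

/-- The projective dimension of `M`: the smallest possible length of a finite free
resolution of `M`. -/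
noncomputable def projDim (R : Type) [CommRing R] (M : Type) [AddCommGroup M]
    [Module R M] : ℕ :=
  sInf {k | HasFreeResLen R M k}

/-- The depth of `S/I` (with respect to the irrelevant maximal ideal), via the
Auslander–Buchsbaum formula: `depth S/I = (number of variables) - projdim S/I`. -/
noncomputable def depthQuot {σ : Type} (K : Type) [Field K] (I : Ideal (MvPolynomial σ K)) :
    ℕ :=
  Nat.card σ - projDim (MvPolynomial σ K) (MvPolynomial σ K ⧸ I)

/-- `S/I` admits a graded free resolution (by finitely generated graded free modules,
with generator degrees `degs`) in which all shifts `j` occurring in homological degree `i`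
satisfy `j ≤ r + i`.  The minimum of all such `r` is the Castelnuovo–Mumford regularity
`max { j - i : β_{ij}(S/I) ≠ 0 }`. -/
def HasGradedFreeResRegLE {σ : Type} (K : Type) [Field K] (I : Ideal (MvPolynomial σ K))
    (r : ℕ) : Prop :=
  ∃ (len : ℕ) (ι : ℕ → Type) (_ : ∀ i, Finite (ι i)) (degs : ∀ i, ι i → ℕ)
    (d : ∀ i : ℕ, (ι (i + 1) →₀ MvPolynomial σ K) →ₗ[MvPolynomial σ K] (ι i →₀ MvPolynomial σ K))
    (ε : (ι 0 →₀ MvPolynomial σ K) →ₗ[MvPolynomial σ K] (MvPolynomial σ K ⧸ I)),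
      (∀ i, len < i → IsEmpty (ι i)) ∧
      Function.Surjective ε ∧
      Function.Exact (d 0) ε ∧
      (∀ i, Function.Exact (d (i + 1)) (d i)) ∧
      (∀ a : ι 0, ∃ p : MvPolynomial σ K,
        p.IsHomogeneous (degs 0 a) ∧ ε (Finsupp.single a 1) = Ideal.Quotient.mk I p) ∧
      (∀ (i : ℕ) (a : ι (i + 1)) (b : ι i),
        (d i (Finsupp.single a 1)) b = 0 ∨
        ∃ e, e + degs i b = degs (i + 1) a ∧ ((d i (Finsupp.single a 1)) b).IsHomogeneous e) ∧
      (∀ (i : ℕ) (a : ι i), degs i a ≤ r + i)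

/-- The Castelnuovo–Mumford regularity of `S/I`. -/
noncomputable def regQuot {σ : Type} (K : Type) [Field K] (I : Ideal (MvPolynomial σ K)) :
    ℕ :=
  sInf {r | HasGradedFreeResRegLE K I r}

/-- The height of a prime ideal `P` (junk value `0` if `P` is not prime). -/
noncomputable def primeHeight {R : Type} [CommRing R] (P : Ideal R) : ℕ∞ :=
  ⨆ h : P.IsPrime, Order.height (⟨P, h⟩ : PrimeSpectrum R)

/-- An ideal is unmixed if all of its minimal primes have the same height. -/
def IsUnmixed {R : Type} [CommRing R] (I : Ideal R) : Prop :=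
  ∀ P ∈ I.minimalPrimes, ∀ Q ∈ I.minimalPrimes, primeHeight P = primeHeight Q

end GBEI

namespace GBEI

/-- The generalized binomial edge ideal of (the restriction of) `G` inside the polynomial
ring `K[x_{kj} : 1 ≤ k ≤ m, j ∈ V]` on a subset `V` of the vertices. -/
noncomputable def gbeiOn (K : Type) [Field K] (m : ℕ) {n : ℕ} (G : SimpleGraph (Fin n))
    (V : Set (Fin n)) : Ideal (MvPolynomial (Fin m × V) K) :=
  Ideal.span {f | ∃ (k l : Fin m) (i j : V),
    k < l ∧ (i : Fin n) < (j : Fin n) ∧ G.Adj (i : Fin n) (j : Fin n) ∧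
    f = MvPolynomial.X (k, i) * MvPolynomial.X (l, j) -
        MvPolynomial.X (l, i) * MvPolynomial.X (k, j)}

/-- The degree-`dd` homogeneous component of `S/I`, the image of the space of homogeneous
polynomials of degree `dd`. -/
noncomputable def quotDeg {σ : Type} (K : Type) [Field K] (I : Ideal (MvPolynomial σ K))
    (dd : ℕ) : Submodule K (MvPolynomial σ K ⧸ I) :=
  Submodule.map (Ideal.Quotient.mkₐ K I).toLinearMap (MvPolynomial.homogeneousSubmodule σ K dd)

/-- The minimal prime `P_T(G)` of `𝔍_G` associated with a set `T` having the cut point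
property: it is generated by the variables `x_{kj}`, `j ∈ T`, together with the 2-minors
`[k,l|i,j]` for all pairs `i < j` of vertices lying in a common connected component of the
restriction of `G` to the complement of `T`. -/
noncomputable def cutPrime (K : Type) [Field K] (m : ℕ) {n : ℕ} (G : SimpleGraph (Fin n))
    (T : Finset (Fin n)) : Ideal (PolyS K m n) :=
  Ideal.span ({f | ∃ (k : Fin m) (j : Fin n), j ∈ T ∧ f = xv K k j} ∪
    {f | ∃ (k l : Fin m) (i j : Fin n) (hi : i ∈ ((↑T : Set (Fin n))ᶜ))
      (hj : j ∈ ((↑T : Set (Fin n))ᶜ)),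
      k < l ∧ i < j ∧ (G.induce ((↑T : Set (Fin n))ᶜ)).Reachable ⟨i, hi⟩ ⟨j, hj⟩ ∧
      f = pminor K k l i j})

end GBEI

/-! Let `φ` substitute `0` for the variables `x_{kj}`, `j ∈ A`. It maps every 2-minor of `𝔍_G`
to itself or to `0`, so `φ(𝔍_G) ⊆ 𝔍_G`, and it kills the variable ideal; on a polynomial it
just deletes the terms divisible by one of these variables. Hence for `p ∈ 𝔍_G + (x_{kj})`,
either the leading monomial of `p` is divisible by some `x_{kj}`, `j ∈ A`, or it is also the
leading monomial of `φ(p) ∈ 𝔍_G`. -/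

namespace MvPolynomial

variable {σ R : Type*} [CommRing R]

noncomputable def killVars (s : Set σ) : MvPolynomial σ R →ₐ[R] MvPolynomial σ R :=
  aeval (sᶜ.indicator X)

variable {s : Set σ}

theorem killVars_X_of_mem {i : σ} (hi : i ∈ s) : killVars s (X i : MvPolynomial σ R) = 0 := by
  simp [killVars, hi]

theorem killVars_X_of_notMem {i : σ} (hi : i ∉ s) :
    killVars s (X i : MvPolynomial σ R) = X i := by
  simp [killVars, hi]

theorem killVars_monomial (d : σ →₀ ℕ) (c : R) [Decidable (∀ i ∈ s, d i = 0)] :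
    killVars s (monomial d c) = if ∀ i ∈ s, d i = 0 then monomial d c else 0 := by
  rw [killVars, aeval_monomial, monomial_eq, algebraMap_eq, Finsupp.prod, Finsupp.prod]
  split_ifs with hd
  · congr 1
    refine Finset.prod_congr rfl fun i hi => ?_
    have hic : i ∈ sᶜ := fun his => Finsupp.mem_support_iff.mp hi (hd i his)
    rw [Set.indicator_of_mem hic]
  · obtain ⟨i, his, hdi⟩ : ∃ i ∈ s, d i ≠ 0 := by simpa using hd
    have hfactor : (sᶜ.indicator X i : MvPolynomial σ R) ^ d i = 0 := by
      rw [Set.indicator_of_notMem (Set.notMem_compl_iff.mpr his), zero_pow hdi]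
    rw [Finset.prod_eq_zero (Finsupp.mem_support_iff.mpr hdi) hfactor, mul_zero]

theorem coeff_killVars (p : MvPolynomial σ R) (d : σ →₀ ℕ) [Decidable (∀ i ∈ s, d i = 0)] :
    coeff d (killVars s p) = if ∀ i ∈ s, d i = 0 then coeff d p else 0 := by
  classical
  induction p using induction_on' with
  | monomial e c =>
    rw [killVars_monomial, coeff_monomial]
    by_cases hed : e = d
    · subst hed
      rw [if_pos rfl]
      split_ifs <;> simp
    · rw [if_neg hed]
      split_ifs <;> simp [coeff_monomial, hed]
  | add p q hp hq =>
    rw [map_add, coeff_add, hp, hq, coeff_add]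
    split_ifs <;> simp

theorem support_killVars_subset (p : MvPolynomial σ R) : (killVars s p).support ⊆ p.support := by
  classical
  intro d hd
  rw [mem_support_iff, coeff_killVars] at hd
  split_ifs at hd
  exacts [mem_support_iff.mpr hd, absurd rfl hd]

theorem span_X_le_ker_killVars :
    Ideal.span (X '' s) ≤ RingHom.ker (killVars s : MvPolynomial σ R →ₐ[R] _) := by
  rw [Ideal.span_le]
  rintro _ ⟨i, hi, rfl⟩
  exact killVars_X_of_mem hi

theorem killVars_mem_of_mem_sup_span_X {I : Ideal (MvPolynomial σ R)}
    (hI : I ≤ I.comap (killVars s)) {p : MvPolynomial σ R} (hp : p ∈ I ⊔ Ideal.span (X '' s)) :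
    killVars s p ∈ I := by
  obtain ⟨q, hq, r, hr, rfl⟩ := Submodule.mem_sup.mp hp
  rw [map_add, span_X_le_ker_killVars hr, add_zero]
  exact hI hq

theorem monomial_mem_span_X {d : σ →₀ ℕ} {i : σ} (hi : i ∈ s) (hdi : d i ≠ 0) (c : R) :
    monomial d c ∈ Ideal.span (X '' s) :=
  mem_ideal_span_X_image.mpr fun e he =>
    ⟨i, hi, by rwa [Finset.mem_singleton.mp (support_monomial_subset he)]⟩

end MvPolynomial

namespace GBEI

open MvPolynomial

variable {K : Type} [Field K] {m n : ℕ}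

theorem iniIdeal_mono {I J : Ideal (PolyS K m n)} (h : I ≤ J) : iniIdeal K I ≤ iniIdeal K J :=
  Ideal.span_mono fun _ ⟨p, hp, d, hd, hf⟩ => ⟨p, h hp, d, hd, hf⟩

theorem isLeadExp_X (v : Fin m ×ₗ Fin n) : IsLeadExp K (X v) (Finsupp.single v 1) :=
  ⟨by simp [support_X], fun e he hne => absurd (by simpa [support_X] using he) hne⟩

theorem X_mem_iniIdeal {I : Ideal (PolyS K m n)} {v : Fin m ×ₗ Fin n} (h : X v ∈ I) :
    X v ∈ iniIdeal K I :=
  Ideal.subset_span ⟨X v, h, _, isLeadExp_X v, rfl⟩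

theorem IsLeadExp.killVars {p : PolyS K m n} {d : (Fin m ×ₗ Fin n) →₀ ℕ}
    {s : Set (Fin m ×ₗ Fin n)} (hd : IsLeadExp K p d) (hs : ∀ i ∈ s, d i = 0) :
    IsLeadExp K (MvPolynomial.killVars s p) d := by
  classical
  refine ⟨?_, fun e he hne => hd.2 e (support_killVars_subset p he) hne⟩
  rw [mem_support_iff, coeff_killVars, if_pos hs]
  exact mem_support_iff.mp hd.1

theorem iniIdeal_sup_span_X {I : Ideal (PolyS K m n)} {s : Set (Fin m ×ₗ Fin n)}
    (hI : I ≤ I.comap (killVars s)) :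
    iniIdeal K (I ⊔ Ideal.span (X '' s)) = iniIdeal K I ⊔ Ideal.span (X '' s) := by
  refine le_antisymm ?_ (sup_le (iniIdeal_mono le_sup_left) ?_)
  · rw [iniIdeal, Ideal.span_le]
    rintro _ ⟨p, hp, d, hd, rfl⟩
    by_cases hs : ∀ i ∈ s, d i = 0
    · exact Ideal.mem_sup_left <| Ideal.subset_span
        ⟨_, killVars_mem_of_mem_sup_span_X hI hp, d, hd.killVars hs, rfl⟩
    · obtain ⟨i, hi, hdi⟩ : ∃ i ∈ s, d i ≠ 0 := by simpa using hs
      exact Ideal.mem_sup_right (monomial_mem_span_X hi hdi 1)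
  · rw [Ideal.span_le]
    rintro _ ⟨i, hi, rfl⟩
    exact X_mem_iniIdeal (Ideal.mem_sup_right (Ideal.subset_span ⟨i, hi, rfl⟩))

theorem varsIdeal_eq_span_X (A : Finset (Fin n)) :
    varsIdeal K m A = Ideal.span (X '' {v | (ofLex v).2 ∈ A}) := by
  rw [varsIdeal]
  congr 1
  ext f
  constructor
  · rintro ⟨k, j, hj, rfl⟩
    exact ⟨toLex (k, j), hj, rfl⟩
  · rintro ⟨v, hv, rfl⟩
    exact ⟨(ofLex v).1, (ofLex v).2, hv, rfl⟩

theorem killVars_xv (A : Finset (Fin n)) (k : Fin m) (j : Fin n) :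
    killVars {v | (ofLex v).2 ∈ A} (xv K k j) = if j ∈ A then 0 else xv K k j := by
  split_ifs with hj
  exacts [killVars_X_of_mem hj, killVars_X_of_notMem hj]

theorem killVars_pminor (A : Finset (Fin n)) (k l : Fin m) (i j : Fin n) :
    killVars {v | (ofLex v).2 ∈ A} (pminor K k l i j) =
      if i ∈ A ∨ j ∈ A then 0 else pminor K k l i j := by
  simp only [pminor, map_sub, map_mul, killVars_xv]
  by_cases hi : i ∈ A <;> by_cases hj : j ∈ A <;> simp [hi, hj]

theorem gbei_le_comap_killVars (G : SimpleGraph (Fin n)) (A : Finset (Fin n)) :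
    gbei K m G ≤ (gbei K m G).comap (killVars {v | (ofLex v).2 ∈ A}) := by
  rw [gbei, Ideal.span_le]
  rintro _ ⟨k, l, i, j, hkl, hij, hG, rfl⟩
  rw [SetLike.mem_coe, Ideal.mem_comap, killVars_pminor]
  split_ifs
  exacts [Ideal.zero_mem _, Ideal.subset_span ⟨k, l, i, j, hkl, hij, hG, rfl⟩]

theorem iniIdeal_gbei_add_vars_general (K : Type) [Field K] (m n : ℕ)
    (G : SimpleGraph (Fin n)) (A : Finset (Fin n)) :
    iniIdeal K (gbei K m G + varsIdeal K m A) =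
      iniIdeal K (gbei K m G) + varsIdeal K m A := by
  rw [Submodule.add_eq_sup, Submodule.add_eq_sup, varsIdeal_eq_span_X]
  exact iniIdeal_sup_span_X (gbei_le_comap_killVars G A)

/-- for any subset `A` of vertices,
`ini_<(𝔍_G + (x_{kj} : k, j ∈ A)) = ini_<(𝔍_G) + (x_{kj} : k, j ∈ A)`. -/
theorem iniIdeal_gbei_add_vars (K : Type) [Field K] (m n : ℕ) (hm : 2 ≤ m) (hn : 2 ≤ n)
    (G : SimpleGraph (Fin n)) (A : Finset (Fin n)) :
    iniIdeal K (gbei K m G + varsIdeal K m A) =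
      iniIdeal K (gbei K m G) + varsIdeal K m A :=
  iniIdeal_gbei_add_vars_general K m n G A

end GBEI
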